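/- In any CL5⁻ proof of a formula F that contains no application of the empty cirquent axiom, the number of applications of pool weakening is at most the length of F, and every cirquent occurring in the proof contains at most k oformulas, where k is the length of F. -/

import Mathlib

namespace CirquentCalc

/-- Formulas: literals (negation applied only to atoms), ∧, ∨. -/
inductive Fml where
  | pos : ℕ → Fml
  | neg : ℕ → Fml
  | and : Fml → Fml → Fml
  | or : Fml → Fml → Fml
deriving DecidableEq

namespace Fml

/-- Negation (pushed to atoms, as ¬ applies only to atoms). -/
def negate : Fml → Fml
  | pos n => neg n
  | neg n => pos n
  | and a b => or a.negate b.negate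
  | or a b => and a.negate b.negate

/-- Substitution extended homomorphically. -/
def subst (σ : ℕ → Fml) : Fml → Fml
  | pos n => σ n
  | neg n => (σ n).negate
  | and a b => and (a.subst σ) (b.subst σ)
  | or a b => or (a.subst σ) (b.subst σ)

/-- Classical evaluation under a truth assignment. -/
def eval (v : ℕ → Bool) : Fml → Bool
  | pos n => v n
  | neg n => !(v n)
  | and a b => a.eval v && b.eval v
  | or a b => a.eval v || b.eval v

/-- Number of positive occurrences of atom `a`. -/
def cPos (a : ℕ) : Fml → ℕ
  | pos n => if n = a then 1 else 0
  | neg _ => 0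
  | and f g => f.cPos a + g.cPos a
  | or f g => f.cPos a + g.cPos a

/-- Number of negative occurrences of atom `a`. -/
def cNeg (a : ℕ) : Fml → ℕ
  | pos _ => 0
  | neg n => if n = a then 1 else 0
  | and f g => f.cNeg a + g.cNeg a
  | or f g => f.cNeg a + g.cNeg a

/-- Total number of positive occurrences of atoms. -/
def posOcc : Fml → ℕ
  | pos _ => 1
  | neg _ => 0
  | and f g => f.posOcc + g.posOcc
  | or f g => f.posOcc + g.posOcc

/-- Length: total number of occurrences of literals and connectives. -/
def len : Fml → ℕ
  | pos _ => 1
  | neg _ => 1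
  | and f g => f.len + g.len + 1
  | or f g => f.len + g.len + 1

/-- Number of occurrences of ∧. -/
def nAnd : Fml → ℕ
  | pos _ => 0
  | neg _ => 0
  | and f g => f.nAnd + g.nAnd + 1
  | or f g => f.nAnd + g.nAnd

/-- Number of occurrences of ∨. -/
def nOr : Fml → ℕ
  | pos _ => 0
  | neg _ => 0
  | and f g => f.nOr + g.nOr
  | or f g => f.nOr + g.nOr + 1

end Fml

def Tautology (A : Fml) : Prop := ∀ v, A.eval v = true

/-- No atom has more than two occurrences. -/
def Binary (A : Fml) : Prop := ∀ a, A.cPos a + A.cNeg a ≤ 2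

/-- Whenever an atom occurs twice, one occurrence is positive and one negative. -/
def Normal (A : Fml) : Prop := ∀ a, A.cPos a ≤ 1 ∧ A.cNeg a ≤ 1

def AtomicLevel (σ : ℕ → Fml) : Prop := ∀ n, ∃ m, σ n = Fml.pos m

/-- `F` is an instance of `B`: σ(B) = F for some substitution σ. -/
def InstanceOf (F B : Fml) : Prop := ∃ σ, B.subst σ = F

/-- `F` is an atomic-level instance of `B`. -/
def AtomicInstanceOf (F B : Fml) : Prop := ∃ σ, AtomicLevel σ ∧ B.subst σ = F

/-- A cirquent: a pool of (occurrences of) formulas, and a list of ogroups,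
each an (index-)set of oformulas of the pool. -/
structure Cirquent where
  pool : List Fml
  groups : List (Finset ℕ)

def emptyCirquent : Cirquent := ⟨[], []⟩

def idCirquent (F : Fml) : Cirquent := ⟨[F.negate, F], [{0, 1}]⟩

/-- The cirquent with pool ⟨F⟩ and one ogroup containing F. -/
def fmlCirquent (F : Fml) : Cirquent := ⟨[F], [{0}]⟩

/-- Index renaming swapping `i` and `i+1`. -/
def swapIdx (i : ℕ) : ℕ → ℕ := fun j => if j = i then i + 1 else if j = i + 1 then i else j

/-- Index renaming when a new oformula is inserted at position `i`. -/
def insShift (i : ℕ) : ℕ → ℕ := fun j => if j < i then j else j + 1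

/-- Index renaming when the oformulas at positions `i`, `i+1` are merged into one at `i`. -/
def mergeIdx (i : ℕ) : ℕ → ℕ := fun j => if j ≤ i then j else j - 1

/-- Mix: placing the two premise cirquents side by side. -/
def MixStep (A B C : Cirquent) : Prop :=
  C.pool = A.pool ++ B.pool ∧
  C.groups = A.groups ++ B.groups.map (Finset.image (· + A.pool.length))

/-- Oformula exchange: swap two adjacent oformulas, preserving containment. -/
def OfExchStep (P C : Cirquent) : Prop :=
  ∃ (l₁ l₂ : List Fml) (F G : Fml),
    P.pool = l₁ ++ F :: G :: l₂ ∧ C.pool = l₁ ++ G :: F :: l₂ ∧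
    C.groups = P.groups.map (Finset.image (swapIdx l₁.length))

/-- Ogroup exchange: swap two adjacent ogroups. -/
def OgExchStep (P C : Cirquent) : Prop :=
  C.pool = P.pool ∧
  ∃ (g₁ g₂ : List (Finset ℕ)) (Γ Δ : Finset ℕ),
    P.groups = g₁ ++ Γ :: Δ :: g₂ ∧ C.groups = g₁ ++ Δ :: Γ :: g₂

/-- Pool weakening: insert a new oformula, contained in no ogroup. -/
def PoolWeakStep (P C : Cirquent) : Prop :=
  ∃ (l₁ l₂ : List Fml) (F : Fml),
    P.pool = l₁ ++ l₂ ∧ C.pool = l₁ ++ F :: l₂ ∧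
    C.groups = P.groups.map (Finset.image (insShift l₁.length))

/-- Ogroup weakening: add a new arc between a pre-existing ogroup and oformula. -/
def OgWeakStep (P C : Cirquent) : Prop :=
  C.pool = P.pool ∧
  ∃ (g₁ g₂ : List (Finset ℕ)) (Γ : Finset ℕ) (j : ℕ),
    j < P.pool.length ∧ j ∉ Γ ∧
    P.groups = g₁ ++ Γ :: g₂ ∧ C.groups = g₁ ++ insert j Γ :: g₂

/-- Downward duplication: replace an ogroup by two adjacent copies of it. -/
def DupDownStep (P C : Cirquent) : Prop :=
  C.pool = P.pool ∧
  ∃ (g₁ g₂ : List (Finset ℕ)) (Γ : Finset ℕ),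
    P.groups = g₁ ++ Γ :: g₂ ∧ C.groups = g₁ ++ Γ :: Γ :: g₂

/-- Upward duplication: the converse of downward duplication. -/
def DupUpStep (P C : Cirquent) : Prop :=
  C.pool = P.pool ∧
  ∃ (g₁ g₂ : List (Finset ℕ)) (Γ : Finset ℕ),
    P.groups = g₁ ++ Γ :: Γ :: g₂ ∧ C.groups = g₁ ++ Γ :: g₂

/-- ∨-introduction: merge two adjacent oformulas F, G into F ∨ G. -/
def OrIntroStep (P C : Cirquent) : Prop :=
  ∃ (l₁ l₂ : List Fml) (F G : Fml),
    P.pool = l₁ ++ F :: G :: l₂ ∧ C.pool = l₁ ++ (Fml.or F G) :: l₂ ∧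
    C.groups = P.groups.map (Finset.image (mergeIdx l₁.length))

/-- The merging of the ogroup list in ∧-introduction: no ogroup contains both `i`
and `i+1`; every ogroup containing `i` is immediately followed by one containing
`i+1` and vice versa; such pairs are merged. -/
inductive AndMerge (i : ℕ) : List (Finset ℕ) → List (Finset ℕ) → Prop where
  | nil : AndMerge i [] []
  | skip {Γ : Finset ℕ} {l l' : List (Finset ℕ)} :
      i ∉ Γ → (i + 1) ∉ Γ → AndMerge i l l' → AndMerge i (Γ :: l) (Γ :: l')
  | merge {Γ Δ : Finset ℕ} {l l' : List (Finset ℕ)} :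
      i ∈ Γ → (i + 1) ∉ Γ → (i + 1) ∈ Δ → i ∉ Δ →
      AndMerge i l l' → AndMerge i (Γ :: Δ :: l) ((Γ ∪ Δ) :: l')

/-- ∧-introduction. -/
def AndIntroStep (P C : Cirquent) : Prop :=
  ∃ (l₁ l₂ : List Fml) (F G : Fml) (merged : List (Finset ℕ)),
    P.pool = l₁ ++ F :: G :: l₂ ∧ C.pool = l₁ ++ (Fml.and F G) :: l₂ ∧
    AndMerge l₁.length P.groups merged ∧
    C.groups = merged.map (Finset.image (mergeIdx l₁.length))

inductive RuleName where
  | emptyAx | idAx | mix | ofExch | ogExch | poolWeak | ogWeak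
  | dupDown | dupUp | orIntro | andIntro
deriving DecidableEq

/-- The unary (one-premise) rules, by name. -/
def unRel : RuleName → Cirquent → Cirquent → Prop
  | .ofExch => OfExchStep
  | .ogExch => OgExchStep
  | .poolWeak => PoolWeakStep
  | .ogWeak => OgWeakStep
  | .dupDown => DupDownStep
  | .dupUp => DupUpStep
  | .orIntro => OrIntroStep
  | .andIntro => AndIntroStep
  | _ => fun _ _ => False

/-- Proof trees: each node is labeled by its cirquent and the rule used. -/
inductive PTree where
  | leaf (C : Cirquent) (r : RuleName)
  | un (C : Cirquent) (r : RuleName) (p : PTree)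
  | bin (C : Cirquent) (r : RuleName) (p q : PTree)

namespace PTree

def concl : PTree → Cirquent
  | leaf C _ => C
  | un C _ _ => C
  | bin C _ _ _ => C

/-- Validity: each node follows from its children by the named rule. -/
def Valid : PTree → Prop
  | leaf C r =>
      (r = .emptyAx ∧ C = emptyCirquent) ∨ (r = .idAx ∧ ∃ F, C = idCirquent F)
  | un C r p => p.Valid ∧ unRel r p.concl C
  | bin C r p q => p.Valid ∧ q.Valid ∧ r = .mix ∧ MixStep p.concl q.concl C

/-- Number of applications of rule `r` in the proof. -/
def count (r : RuleName) : PTree → ℕ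
  | leaf _ r' => if r' = r then 1 else 0
  | un _ r' p => (if r' = r then 1 else 0) + p.count r
  | bin _ r' p q => (if r' = r then 1 else 0) + p.count r + q.count r

/-- The cirquents occurring in the proof. -/
def cirquents : PTree → List Cirquent
  | leaf C _ => [C]
  | un C _ p => C :: p.cirquents
  | bin C _ p q => C :: (p.cirquents ++ q.cirquents)

/-- Total number of rule applications (nodes). -/
def nodes : PTree → ℕ
  | leaf _ _ => 1
  | un _ _ p => p.nodes + 1
  | bin _ _ p q => p.nodes + q.nodes + 1

/-- Number of leaves of the proof tree. -/
def leavesCount : PTree → ℕ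
  | leaf _ _ => 1
  | un _ _ p => p.leavesCount
  | bin _ _ p q => p.leavesCount + q.leavesCount

end PTree

/-- A proof uses no duplication. -/
def DupFree (p : PTree) : Prop :=
  p.count RuleName.dupDown = 0 ∧ p.count RuleName.dupUp = 0

/-- Provability of a cirquent in CL5. -/
def ProvesC (C : Cirquent) : Prop := ∃ p : PTree, p.Valid ∧ p.concl = C

/-- Provability of a formula in CL5. -/
def ProvesCL5 (F : Fml) : Prop := ∃ p : PTree, p.Valid ∧ p.concl = fmlCirquent F

/-- Provability of a formula in CL5⁻ (CL5 without duplication). -/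
def ProvesCL5m (F : Fml) : Prop :=
  ∃ p : PTree, p.Valid ∧ DupFree p ∧ p.concl = fmlCirquent F

/-- Number of arcs of a cirquent (sum of the sizes of its ogroups). -/
def Cirquent.arcs (C : Cirquent) : ℕ := (C.groups.map Finset.card).sum

/-- Size of a cirquent: sum of the lengths of the oformulas in its pool plus
the sum of the sizes of its ogroups. -/
def Cirquent.size (C : Cirquent) : ℕ := (C.pool.map Fml.len).sum + C.arcs

/-- Size of a proof: the sum of the sizes of the cirquents it contains. -/
def PTree.size (p : PTree) : ℕ := (p.cirquents.map Cirquent.size).sum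

/-- Total number of positive occurrences of atoms in the pool. -/
def Cirquent.poolPosOcc (C : Cirquent) : ℕ := (C.pool.map Fml.posOcc).sum

end CirquentCalc

open CirquentCalc

/-! The total length of the formulas in the pool never decreases from premises to conclusion:
exchanges, ogroup weakening and duplication leave the pool alone, the introduction rules merge two
formulas into one whose length is the sum plus one, mix adds the two totals, and pool weakening adds
a formula of length at least one. Hence it bounds the number of pool weakenings below the root,
where it equals the length of `F`; and since every formula has length at least one, it also bounds
the number of oformulas of every cirquent in the proof. -/

namespace CirquentCalc

lemma Fml.one_le_len (F : Fml) : 1 ≤ F.len := by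
  cases F <;> simp [Fml.len]

def Cirquent.poolLen (C : Cirquent) : ℕ := (C.pool.map Fml.len).sum

lemma Cirquent.length_pool_le_poolLen (C : Cirquent) : C.pool.length ≤ C.poolLen := by
  simpa [Cirquent.poolLen] using
    List.length_le_sum_of_one_le (C.pool.map Fml.len) (by simp [Fml.one_le_len])

@[simp]
lemma Cirquent.poolLen_fmlCirquent (F : Fml) : (fmlCirquent F).poolLen = F.len := by
  simp [Cirquent.poolLen, fmlCirquent]

lemma PoolWeakStep.poolLen_lt {P C : Cirquent} (h : PoolWeakStep P C) :
    P.poolLen < C.poolLen := by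
  obtain ⟨l₁, l₂, F, hP, hC, -⟩ := h
  have := F.one_le_len
  simp only [Cirquent.poolLen, hP, hC, List.map_append, List.map_cons, List.sum_append,
    List.sum_cons]
  omega

lemma MixStep.poolLen_eq {A B C : Cirquent} (h : MixStep A B C) :
    C.poolLen = A.poolLen + B.poolLen := by
  simp [Cirquent.poolLen, h.1]

lemma unRel.poolLen_le {r : RuleName} {P C : Cirquent} (h : unRel r P C) :
    P.poolLen ≤ C.poolLen := by
  cases r with
  | emptyAx | idAx | mix => exact h.elim
  | ogExch | ogWeak | dupDown | dupUp => simp [Cirquent.poolLen, h.1]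
  | poolWeak => exact (PoolWeakStep.poolLen_lt h).le
  | ofExch =>
    obtain ⟨l₁, l₂, F, G, hP, hC, -⟩ := h
    simp [Cirquent.poolLen, hP, hC]
    omega
  | orIntro =>
    obtain ⟨l₁, l₂, F, G, hP, hC, -⟩ := h
    simp [Cirquent.poolLen, hP, hC, Fml.len]
    omega
  | andIntro =>
    obtain ⟨l₁, l₂, F, G, -, hP, hC, -⟩ := h
    simp [Cirquent.poolLen, hP, hC, Fml.len]
    omega

namespace PTree

lemma count_poolWeak_le_poolLen {p : PTree} (hv : p.Valid) :
    p.count .poolWeak ≤ p.concl.poolLen := by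
  induction p with
  | leaf C r =>
    rcases hv with ⟨rfl, -⟩ | ⟨rfl, -⟩ <;> simp [count]
  | un C r q ih =>
    obtain ⟨hq, hstep⟩ := hv
    have hle := ih hq
    by_cases hr : r = .poolWeak
    · subst hr
      have := PoolWeakStep.poolLen_lt hstep
      simp only [count, concl.eq_2, ↓reduceIte]
      omega
    · have := unRel.poolLen_le hstep
      simp only [count, concl.eq_2, if_neg hr]
      omega
  | bin C r q₁ q₂ ih₁ ih₂ =>
    obtain ⟨h₁, h₂, rfl, hmix⟩ := hv
    have := ih₁ h₁
    have := ih₂ h₂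
    simp only [count, concl.eq_3, hmix.poolLen_eq, reduceCtorEq, ↓reduceIte]
    omega

lemma poolLen_le_of_mem_cirquents {p : PTree} (hv : p.Valid) :
    ∀ C ∈ p.cirquents, C.poolLen ≤ p.concl.poolLen := by
  induction p with
  | leaf C r => simp [cirquents, concl]
  | un C r q ih =>
    obtain ⟨hq, hstep⟩ := hv
    simp only [cirquents, concl.eq_2, List.mem_cons, forall_eq_or_imp, le_refl, true_and]
    exact fun D hD => (ih hq D hD).trans (unRel.poolLen_le hstep)
  | bin C r q₁ q₂ ih₁ ih₂ =>
    obtain ⟨h₁, h₂, -, hmix⟩ := hv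
    simp only [cirquents, concl.eq_3, List.mem_cons, List.mem_append, forall_eq_or_imp, le_refl,
      true_and, hmix.poolLen_eq]
    rintro D (hD | hD)
    · exact (ih₁ h₁ D hD).trans (Nat.le_add_right _ _)
    · exact (ih₂ h₂ D hD).trans (Nat.le_add_left _ _)

end PTree

end CirquentCalc

theorem cl5m_pool_weakening_count_general (F : Fml) (p : PTree)
    (hv : p.Valid) (hc : p.concl = fmlCirquent F) :
    p.count RuleName.poolWeak ≤ F.len ∧
    ∀ C ∈ p.cirquents, C.pool.length ≤ F.len := by
  have hroot : p.concl.poolLen = F.len := by simp [hc]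
  refine ⟨hroot ▸ PTree.count_poolWeak_le_poolLen hv, fun C hC => ?_⟩
  calc C.pool.length ≤ C.poolLen := C.length_pool_le_poolLen
    _ ≤ p.concl.poolLen := PTree.poolLen_le_of_mem_cirquents hv C hC
    _ = F.len := hroot

/-- In any CL5⁻ proof of F with no empty cirquent axiom, pool
weakening is applied at most len F times, and every cirquent in the proof has at
most len F oformulas. -/
theorem cl5m_pool_weakening_count (F : Fml) (p : PTree)
    (hv : p.Valid) (hd : DupFree p) (hc : p.concl = fmlCirquent F)
    (he : p.count RuleName.emptyAx = 0) :
    p.count RuleName.poolWeak ≤ F.len ∧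
    ∀ C ∈ p.cirquents, C.pool.length ≤ F.len :=
  cl5m_pool_weakening_count_general F p hv hc
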